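/- arXiv:2311.05501 — 5 statements merged into one kernel-verified Lean document; each statement's English description precedes it below -/
import Mathlib

section
/- Let G be a finite graph on n vertices with symmetric edge-weight matrix W ∈ ℝ^{n×n} having nonnegative entries, let D be the diagonal degree matrix with d_i = ∑_{j=1}^n W_{ij}, and let L = D − W be the combinatorial graph Laplacian. For any τ > 0 the matrix L + τI is invertible, and for any fixed vertex ℓ the solution g ∈ ℝ^n of (L + τI) g = e_ℓ (where e_ℓ is the ℓ-th standard basis vector) attains its maximum at the source vertex, i.e. g_i ≤ g_ℓ for every vertex i; moreover g_ℓ ≤ 1/τ. -/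
open Matrix in
lemma aux_max (n : ℕ) (W : Matrix (Fin n) (Fin n) ℝ) (hW : ∀ i j, 0 ≤ W i j) (τ : ℝ)
    (g : Fin n → ℝ) (i0 : Fin n) (hmax : ∀ j, g j ≤ g i0) :
    τ * g i0 ≤ ((Matrix.diagonal (fun i => ∑ j, W i j) - W
      + τ • (1 : Matrix (Fin n) (Fin n) ℝ)).mulVec g) i0 := by
  have hsum : ∑ j, W i0 j * g j ≤ ∑ j, W i0 j * g i0 :=
    Finset.sum_le_sum fun j _ => mul_le_mul_of_nonneg_left (hmax j) (hW i0 j)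
  have hWm : W.mulVec g i0 = ∑ j, W i0 j * g j := rfl
  simp only [Matrix.add_mulVec, Matrix.sub_mulVec, Matrix.smul_mulVec,
    Matrix.one_mulVec, Pi.add_apply, Pi.sub_apply, Pi.smul_apply, smul_eq_mul,
    Matrix.mulVec_diagonal, hWm]
  rw [← Finset.sum_mul] at hsum
  linarith

/-- **Maximum principle for Poisson propagation on a graph.**
Let `W` be a symmetric nonnegative edge-weight matrix on `n` vertices, `D` the diagonal degree
matrix with `d i = ∑ j, W i j`, and `L = D - W` the combinatorial graph Laplacian. For `τ > 0`
the matrix `L + τ I` is invertible, and the solution `g` of `(L + τI) g = e ℓ` attains its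
maximum at the source vertex `ℓ`; moreover `g ℓ ≤ 1/τ`. -/
theorem stmt0 (n : ℕ) (W : Matrix (Fin n) (Fin n) ℝ)
    (hWsymm : W.IsSymm) (hWnonneg : ∀ i j, 0 ≤ W i j)
    (τ : ℝ) (hτ : 0 < τ) (ℓ : Fin n)
    (L : Matrix (Fin n) (Fin n) ℝ)
    (hL : L = Matrix.diagonal (fun i => ∑ j, W i j) - W) :
    IsUnit (L + τ • (1 : Matrix (Fin n) (Fin n) ℝ)) ∧
      ∀ g : Fin n → ℝ,
        (L + τ • (1 : Matrix (Fin n) (Fin n) ℝ)).mulVec g = Pi.single ℓ 1 →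
          (∀ i, g i ≤ g ℓ) ∧ g ℓ ≤ 1 / τ := by
  subst hL
  set A : Matrix (Fin n) (Fin n) ℝ :=
    Matrix.diagonal (fun i => ∑ j, W i j) - W + τ • (1 : Matrix (Fin n) (Fin n) ℝ) with hA
  haveI : Nonempty (Fin n) := ⟨ℓ⟩
  -- max/min bounds
  have hmaxb : ∀ (g : Fin n → ℝ) (i0 : Fin n), (∀ j, g j ≤ g i0) →
      τ * g i0 ≤ A.mulVec g i0 := fun g i0 h => aux_max n W hWnonneg τ g i0 h
  have hminb : ∀ (g : Fin n → ℝ) (j0 : Fin n), (∀ j, g j0 ≤ g j) →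
      A.mulVec g j0 ≤ τ * g j0 := by
    intro g j0 h
    have := aux_max n W hWnonneg τ (-g) j0 (fun j => neg_le_neg (h j))
    rw [Matrix.mulVec_neg] at this
    simp only [Pi.neg_apply, mul_neg] at this
    linarith
  constructor
  · rw [← Matrix.mulVec_injective_iff_isUnit]
    intro g h hgh
    have key : ∀ x : Fin n → ℝ, A.mulVec x = 0 → x = 0 := by
      intro x hx
      funext i
      show x i = (0:ℝ)
      obtain ⟨i0, _, hi0⟩ := Finset.exists_max_image Finset.univ x ⟨i, Finset.mem_univ i⟩
      obtain ⟨j0, _, hj0⟩ := Finset.exists_min_image Finset.univ x ⟨i, Finset.mem_univ i⟩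
      have h1 := hmaxb x i0 (fun j => hi0 j (Finset.mem_univ j))
      have h2 := hminb x j0 (fun j => hj0 j (Finset.mem_univ j))
      rw [hx] at h1 h2
      simp only [Pi.zero_apply] at h1 h2
      have hle1 := hi0 i (Finset.mem_univ i)
      have hle2 := hj0 i (Finset.mem_univ i)
      nlinarith
    have : A.mulVec (g - h) = 0 := by
      rw [Matrix.mulVec_sub, hgh, sub_self]
    have := key (g - h) this
    funext i
    have := congrFun this i
    simpa [sub_eq_zero] using this
  · intro g hg
    obtain ⟨i0, _, hi0⟩ := Finset.exists_max_image Finset.univ g ⟨ℓ, Finset.mem_univ ℓ⟩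
    obtain ⟨j0, _, hj0⟩ := Finset.exists_min_image Finset.univ g ⟨ℓ, Finset.mem_univ ℓ⟩
    have h1 := hmaxb g i0 (fun j => hi0 j (Finset.mem_univ j))
    have h2 := hminb g j0 (fun j => hj0 j (Finset.mem_univ j))
    rw [hg] at h1 h2
    -- Pi.single values
    have hb : ∀ i : Fin n, (0:ℝ) ≤ (Pi.single ℓ 1 : Fin n → ℝ) i ∧ (Pi.single ℓ 1 : Fin n → ℝ) i ≤ 1 := by
      intro i
      by_cases h : i = ℓ <;> simp [h, Pi.single_apply]
    -- min ≥ 0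
    have hmin0 : 0 ≤ g j0 := by
      have := (hb j0).1
      nlinarith
    -- max ≤ 1/τ
    have hmax1 : g i0 ≤ 1 / τ := by
      have := (hb i0).2
      rw [le_div_iff₀ hτ]
      nlinarith
    constructor
    · intro i
      by_cases hcase : g i0 ≤ g ℓ
      · exact le_trans (hi0 i (Finset.mem_univ i)) hcase
      · exfalso
        have hne : i0 ≠ ℓ := by
          intro h; rw [h] at hcase; exact hcase le_rfl
        have : (Pi.single ℓ 1 : Fin n → ℝ) i0 = 0 := Pi.single_eq_of_ne hne 1
        rw [this] at h1
        have hmax0 : g i0 ≤ 0 := by nlinarith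
        -- then g ≡ 0
        have hzero : ∀ j, g j = 0 := fun j =>
          le_antisymm (le_trans (hi0 j (Finset.mem_univ j)) hmax0)
            (le_trans hmin0 (hj0 j (Finset.mem_univ j)))
        have : A.mulVec g = 0 := by
          have : g = 0 := funext hzero
          rw [this, Matrix.mulVec_zero]
        rw [hg] at this
        have := congrFun this ℓ
        simp at this
    · exact le_trans (hi0 ℓ (Finset.mem_univ ℓ)) hmax1
end

section
/- Let X ⊆ ℝ^d be measurable, K ≥ 2, and let ρ_1,…,ρ_K be probability densities on X with weights w_k ≥ 0 summing to 1 and mixture density ρ = ∑_{k=1}^K w_k ρ_k; set w_min = min_k w_k > 0. Let 𝒦 : X × X → [0,1] be measurable and a (δ,ζ,ε) class separator with δ ∈ (0,1) and 0 ≤ ε, ζ ≤ 1: there exist pairwise disjoint measurable sets X_1,…,X_K with ∫_{X_i} ρ_i ≥ 1 − δ, 𝒦(x,x') > ζ whenever x,x' lie in the same X_i, and 𝒦(x,x') < ε whenever x ∈ X_i, x' ∈ X_j with i ≠ j. Fix α_0 > 0 and J < K labeled points x^1,…,x^J with x^j ∈ X_{i_j} for pairwise distinct indices i_1,…,i_J,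 and define α : X → ℝ^K by α_k(x) = α_0 + ∑_{j : i_j = k} 𝒦(x^j, x). Let V(α) = (β² − ∑_k α_k²)/(β²(β+1)) with β = ∑_k α_k, and define A_lab = [4(K−1)(α_0+ε)(α_0+1) + K(K−1)(α_0+ε)²] / [(Kα_0+ζ)²(Kα_0+ζ+1)], A_unl = K(K−1)α_0² / [K²(α_0+ε)²(K(α_0+ε)+1)], and A_back = K(K−1)(α_0+1)² / [(Kα_0)²(Kα_0+1)]. Then for any λ > 0, the measure under the density proportional to e^{λ V(α(x))} ρ(x) of the 'bad' set X ∖ (⋃_{k : k ∉ {i_1,…,i_J}} X_k) satisfies: ∫_{bad} e^{λ V(α(x))} ρ(x) dx / ∫_X e^{λ V(α(x))} ρ(x) dx ≤ [δ/((1−δ)w_min)] · exp(λ(A_back − A_unl)) + [(1 − w_min(1−δ))/((1−δ)w_min)] · exp(λ(A_lab − A_unl)). -/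
open MeasureTheory

/-- The Dirichlet variance `V(α) = (β² − ∑ₖ αₖ²)/(β²(β+1))` with `β = ∑ₖ αₖ`,
the trace of the covariance matrix of the Dirichlet distribution with parameter `α`. -/
noncomputable def dirVar {K : ℕ} (α : Fin K → ℝ) : ℝ :=
  ((∑ k, α k) ^ 2 - ∑ k, (α k) ^ 2) / ((∑ k, α k) ^ 2 * ((∑ k, α k) + 1))

lemma dirVar_num_eq {K : ℕ} (a : Fin K → ℝ) :
    (∑ k, a k) ^ 2 - ∑ k, (a k) ^ 2 = ∑ k, a k * ((∑ j, a j) - a k) := by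
  simp [mul_sub, Finset.sum_sub_distrib, ← Finset.sum_mul, sq]

lemma dirVar_le_upper {K : ℕ} (a : Fin K → ℝ) (hi slo : ℝ)
    (hnn : ∀ k, 0 ≤ a k) (hhi : ∀ k, a k ≤ hi) (hslo : 0 < slo)
    (hS : slo ≤ ∑ k, a k) :
    dirVar a ≤ (K : ℝ) * ((K : ℝ) - 1) * hi ^ 2 / (slo ^ 2 * (slo + 1)) := by
  have hKnat : 0 < K := by
    by_contra h
    push_neg at h
    have hK0 : K = 0 := Nat.le_zero.mp h
    subst hK0
    simp at hS
    linarith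
  set S := ∑ k, a k with hSdef
  have hSpos : 0 < S := lt_of_lt_of_le hslo hS
  have hK1 : (1:ℝ) ≤ (K:ℝ) := by exact_mod_cast hKnat
  obtain ⟨k0⟩ : Nonempty (Fin K) := ⟨⟨0, hKnat⟩⟩
  have hhi0 : 0 ≤ hi := le_trans (hnn k0) (hhi k0)
  have hak_le_S : ∀ k, a k ≤ S := fun k =>
    Finset.single_le_sum (fun j _ => hnn j) (Finset.mem_univ k)
  have hSle : S ≤ (K:ℝ) * hi := by
    calc S ≤ ∑ _k : Fin K, hi := Finset.sum_le_sum (fun k _ => hhi k)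
      _ = (K:ℝ) * hi := by simp [mul_comm]
  have hnum : S ^ 2 - ∑ k, (a k) ^ 2 ≤ (K:ℝ) * ((K:ℝ) - 1) * hi ^ 2 := by
    rw [hSdef, dirVar_num_eq]
    calc ∑ k, a k * ((∑ j, a j) - a k)
        ≤ ∑ k, hi * ((∑ j, a j) - a k) := by
          refine Finset.sum_le_sum (fun k _ => ?_)
          exact mul_le_mul_of_nonneg_right (hhi k) (by linarith [hak_le_S k])
      _ = hi * ((K:ℝ) * S - S) := by
          rw [← Finset.mul_sum, Finset.sum_sub_distrib]
          simp [← hSdef, Finset.card_univ, nsmul_eq_mul]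
      _ = hi * ((K:ℝ) - 1) * S := by ring
      _ ≤ hi * ((K:ℝ) - 1) * ((K:ℝ) * hi) := by
          refine mul_le_mul_of_nonneg_left hSle (mul_nonneg hhi0 (by linarith))
      _ = (K:ℝ) * ((K:ℝ) - 1) * hi ^ 2 := by ring
  have hden : slo ^ 2 * (slo + 1) ≤ S ^ 2 * (S + 1) := by
    have h1 : slo ^ 2 ≤ S ^ 2 := by nlinarith
    nlinarith
  have hRHSnn : 0 ≤ (K:ℝ) * ((K:ℝ) - 1) * hi ^ 2 :=
    mul_nonneg (mul_nonneg (by linarith) (by linarith)) (sq_nonneg hi)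
  exact div_le_div₀ hRHSnn hnum (by positivity) hden

lemma dirVar_ge_lower {K : ℕ} (a : Fin K → ℝ) (lo hi : ℝ)
    (hlo : ∀ k, lo ≤ a k) (hhi : ∀ k, a k ≤ hi) (hlopos : 0 < lo) :
    (K : ℝ) * ((K : ℝ) - 1) * lo ^ 2 / (((K:ℝ) * hi) ^ 2 * ((K:ℝ) * hi + 1))
      ≤ dirVar a := by
  rcases Nat.eq_zero_or_pos K with hK0 | hKnat
  · subst hK0; simp [dirVar]
  have hK1 : (1:ℝ) ≤ (K:ℝ) := by exact_mod_cast hKnat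
  obtain ⟨k0⟩ : Nonempty (Fin K) := ⟨⟨0, hKnat⟩⟩
  have hhi0 : 0 < hi := lt_of_lt_of_le hlopos (le_trans (hlo k0) (hhi k0))
  set S := ∑ k, a k with hSdef
  have hSlo : (K:ℝ) * lo ≤ S := by
    calc (K:ℝ) * lo = ∑ _k : Fin K, lo := by simp [mul_comm]
      _ ≤ S := Finset.sum_le_sum (fun k _ => hlo k)
  have hSpos : 0 < S := lt_of_lt_of_le (by positivity) hSlo
  have hShi : S ≤ (K:ℝ) * hi := by
    calc S ≤ ∑ _k : Fin K, hi := Finset.sum_le_sum (fun k _ => hhi k)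
      _ = (K:ℝ) * hi := by simp [mul_comm]
  have herase : ∀ k : Fin K, ((K : ℝ) - 1) * lo ≤ S - a k := by
    intro k
    have heq : ∑ j ∈ Finset.univ.erase k, a j = S - a k :=
      Finset.sum_erase_eq_sub (Finset.mem_univ k)
    have h2 := Finset.card_nsmul_le_sum (Finset.univ.erase k) a lo (fun j _ => hlo j)
    have hc : (Finset.univ.erase k).card = K - 1 := by
      simp [Finset.card_erase_of_mem]
    rw [hc, heq] at h2
    calc ((K:ℝ) - 1) * lo = ((K - 1 : ℕ) : ℝ) * lo := by
          rw [Nat.cast_sub hKnat, Nat.cast_one]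
      _ ≤ S - a k := by rw [← nsmul_eq_mul]; exact h2
  have hLHSnn : 0 ≤ (K:ℝ) * ((K:ℝ) - 1) * lo ^ 2 :=
    mul_nonneg (mul_nonneg (by linarith) (by linarith)) (sq_nonneg lo)
  have hnum : (K:ℝ) * ((K:ℝ) - 1) * lo ^ 2 ≤ S ^ 2 - ∑ k, (a k) ^ 2 := by
    rw [hSdef, dirVar_num_eq]
    calc (K:ℝ) * ((K:ℝ) - 1) * lo ^ 2 = ∑ _k : Fin K, lo * (((K:ℝ) - 1) * lo) := by
          simp [Finset.sum_const, Finset.card_univ, nsmul_eq_mul]; ring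
      _ ≤ ∑ k, a k * ((∑ j, a j) - a k) := by
          refine Finset.sum_le_sum (fun k _ => ?_)
          exact mul_le_mul (hlo k) (herase k)
            (mul_nonneg (by linarith) hlopos.le) (by linarith [hlo k])
  have hden : S ^ 2 * (S + 1) ≤ ((K:ℝ) * hi) ^ 2 * ((K:ℝ) * hi + 1) := by
    have h1 : S ^ 2 ≤ ((K:ℝ) * hi) ^ 2 := by nlinarith
    nlinarith
  exact div_le_div₀ (le_trans hLHSnn hnum) hnum (by positivity) hden

lemma dirVar_le_lab {K : ℕ} (a : Fin K → ℝ) (i0 : Fin K) (A1 Ae slo : ℝ)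
    (hnn : ∀ k, 0 ≤ a k) (h1 : a i0 ≤ A1) (hAe : ∀ k, k ≠ i0 → a k ≤ Ae)
    (hA1 : 0 ≤ A1) (hAe0 : 0 ≤ Ae) (hslo : 0 < slo) (hS : slo ≤ ∑ k, a k) :
    dirVar a ≤ (2 * A1 * ((K:ℝ) - 1) * Ae + ((K:ℝ) - 1) ^ 2 * Ae ^ 2)
      / (slo ^ 2 * (slo + 1)) := by
  have hKnat : 0 < K := i0.pos
  have hK1 : (1:ℝ) ≤ (K:ℝ) := by exact_mod_cast hKnat
  set S := ∑ k, a k with hSdef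
  have hSpos : 0 < S := lt_of_lt_of_le hslo hS
  set s := S - a i0 with hsdef
  have hsnn : 0 ≤ s := by
    have heq : ∑ j ∈ Finset.univ.erase i0, a j = S - a i0 :=
      Finset.sum_erase_eq_sub (Finset.mem_univ i0)
    rw [hsdef, ← heq]
    exact Finset.sum_nonneg (fun j _ => hnn j)
  have hsle : s ≤ ((K:ℝ) - 1) * Ae := by
    have heq : ∑ j ∈ Finset.univ.erase i0, a j = S - a i0 :=
      Finset.sum_erase_eq_sub (Finset.mem_univ i0)
    have h2 := Finset.sum_le_card_nsmul (Finset.univ.erase i0) a Ae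
      (fun j hj => hAe j (Finset.ne_of_mem_erase hj))
    have hc : (Finset.univ.erase i0).card = K - 1 := by
      simp [Finset.card_erase_of_mem]
    rw [hc, heq] at h2
    calc s ≤ ((K - 1 : ℕ) : ℝ) * Ae := by rw [← nsmul_eq_mul]; exact h2
      _ = ((K:ℝ) - 1) * Ae := by rw [Nat.cast_sub hKnat, Nat.cast_one]
  have hnum : S ^ 2 - ∑ k, (a k) ^ 2
      ≤ 2 * A1 * ((K:ℝ) - 1) * Ae + ((K:ℝ) - 1) ^ 2 * Ae ^ 2 := by
    have hsq : (a i0) ^ 2 ≤ ∑ k, (a k) ^ 2 :=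
      Finset.single_le_sum (fun j _ => sq_nonneg (a j)) (Finset.mem_univ i0)
    have hfact : S ^ 2 - (a i0) ^ 2 = s * s + 2 * (a i0) * s := by
      rw [hsdef]; ring
    nlinarith [hnn i0, mul_le_mul hsle hsle hsnn (by nlinarith),
      mul_le_mul h1 hsle hsnn hA1]
  have hden : slo ^ 2 * (slo + 1) ≤ S ^ 2 * (S + 1) := by
    have h1 : slo ^ 2 ≤ S ^ 2 := by nlinarith
    nlinarith
  have hRHSnn : 0 ≤ 2 * A1 * ((K:ℝ) - 1) * Ae + ((K:ℝ) - 1) ^ 2 * Ae ^ 2 := by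
    have := mul_nonneg (mul_nonneg (mul_nonneg (by norm_num : (0:ℝ) ≤ 2) hA1)
      (by linarith : (0:ℝ) ≤ (K:ℝ) - 1)) hAe0
    positivity
  exact div_le_div₀ hRHSnn hnum (by positivity) hden

set_option maxHeartbeats 1000000 in
/-- **Cluster exploration bound for Dirichlet Active Learning.** If the propagation kernel `𝒦`
is a `(δ,ζ,ε)` class separator of the mixture `ρ = ∑ₖ wₖ ρₖ`, and `J < K` labeled points with
pairwise distinct class indices have been observed, then under proportional sampling with
density proportional to `exp(λ V(α(x))) ρ(x)` the probability mass of the "bad" set (the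
complement of the union of the unlabeled separator sets) is bounded by
`δ/((1−δ)w_min) · e^{λ(A_back − A_unl)} + (1 − w_min(1−δ))/((1−δ)w_min) · e^{λ(A_lab − A_unl)}`. -/
theorem stmt1 (d K : ℕ) (hK : 2 ≤ K)
    (X : Set (Fin d → ℝ)) (hX : MeasurableSet X)
    (ρc : Fin K → (Fin d → ℝ) → ℝ)
    (hρmeas : ∀ k, Measurable (ρc k)) (hρnn : ∀ k z, 0 ≤ ρc k z)
    (hρprob : ∀ k, ∫ z in X, ρc k z = 1)
    (w : Fin K → ℝ) (hwnn : ∀ k, 0 ≤ w k) (hwsum : ∑ k, w k = 1)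
    (wmin : ℝ) (hwminle : ∀ k, wmin ≤ w k) (hwminmem : ∃ k, w k = wmin)
    (hwminpos : 0 < wmin)
    (𝒦 : (Fin d → ℝ) → (Fin d → ℝ) → ℝ) (h𝒦meas : Measurable (Function.uncurry 𝒦))
    (h𝒦01 : ∀ x y, 𝒦 x y ∈ Set.Icc (0 : ℝ) 1)
    (δ ε ζ : ℝ) (hδ : δ ∈ Set.Ioo (0 : ℝ) 1) (hε : ε ∈ Set.Icc (0 : ℝ) 1)
    (hζ : ζ ∈ Set.Icc (0 : ℝ) 1)
    -- the (δ,ζ,ε) class-separator structure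
    (Xs : Fin K → Set (Fin d → ℝ)) (hXsmeas : ∀ k, MeasurableSet (Xs k))
    (hXssub : ∀ k, Xs k ⊆ X)
    (hXsdisj : Pairwise (Function.onFun Disjoint Xs))
    (hXsmass : ∀ k, 1 - δ ≤ ∫ z in Xs k, ρc k z)
    (hsepin : ∀ k, ∀ x ∈ Xs k, ∀ x' ∈ Xs k, ζ < 𝒦 x x')
    (hsepout : ∀ i j, i ≠ j → ∀ x ∈ Xs i, ∀ x' ∈ Xs j, 𝒦 x x' < ε)
    -- labeled points with pairwise distinct class indices
    (α0 : ℝ) (hα0 : 0 < α0)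
    (J : ℕ) (hJ : J < K)
    (pts : Fin J → (Fin d → ℝ)) (idx : Fin J → Fin K) (hidx : Function.Injective idx)
    (hpts : ∀ j, pts j ∈ Xs (idx j))
    -- the pseudo-label field
    (α : (Fin d → ℝ) → Fin K → ℝ)
    (hα : ∀ x k, α x k = α0 + ∑ j : Fin J, if idx j = k then 𝒦 (pts j) x else 0)
    -- the three variance bounds
    (Alab Aunl Aback : ℝ)
    (hAlab : Alab =
      (4 * ((K : ℝ) - 1) * (α0 + ε) * (α0 + 1) + (K : ℝ) * ((K : ℝ) - 1) * (α0 + ε) ^ 2)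
        / (((K : ℝ) * α0 + ζ) ^ 2 * ((K : ℝ) * α0 + ζ + 1)))
    (hAunl : Aunl = (K : ℝ) * ((K : ℝ) - 1) * α0 ^ 2
        / ((K : ℝ) ^ 2 * (α0 + ε) ^ 2 * ((K : ℝ) * (α0 + ε) + 1)))
    (hAback : Aback = (K : ℝ) * ((K : ℝ) - 1) * (α0 + 1) ^ 2
        / (((K : ℝ) * α0) ^ 2 * ((K : ℝ) * α0 + 1)))
    (lam : ℝ) (hlam : 0 < lam) :
    (∫ x in X \ ⋃ k ∈ (Set.range idx)ᶜ, Xs k,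
        Real.exp (lam * dirVar (α x)) * ∑ k, w k * ρc k x)
      / (∫ x in X, Real.exp (lam * dirVar (α x)) * ∑ k, w k * ρc k x)
    ≤ δ / ((1 - δ) * wmin) * Real.exp (lam * (Aback - Aunl))
      + (1 - wmin * (1 - δ)) / ((1 - δ) * wmin) * Real.exp (lam * (Alab - Aunl)) := by

  classical
  obtain ⟨hδ0, hδ1⟩ := hδ
  have hK2 : (2:ℝ) ≤ (K:ℝ) := by exact_mod_cast hK
  have hKpos : (0:ℝ) < K := by linarith
  have hε0 : (0:ℝ) ≤ ε := hε.1
  have hζ0 : (0:ℝ) ≤ ζ := hζ.1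
  set ρ : (Fin d → ℝ) → ℝ := fun x => ∑ k, w k * ρc k x with hρdef
  set g : (Fin d → ℝ) → ℝ := fun x => Real.exp (lam * dirVar (α x)) with hgdef
  set G : Set (Fin d → ℝ) := ⋃ k ∈ (Set.range idx)ᶜ, Xs k with hGdef
  set L : Set (Fin d → ℝ) := ⋃ k ∈ Set.range idx, Xs k with hLdef
  set U : Set (Fin d → ℝ) := ⋃ k, Xs k with hUdef
  -- basic set facts
  have hGm : MeasurableSet G :=
    MeasurableSet.biUnion (Set.to_countable _) (fun k _ => hXsmeas k)
  have hLm : MeasurableSet L :=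
    MeasurableSet.biUnion (Set.to_countable _) (fun k _ => hXsmeas k)
  have hUm : MeasurableSet U := MeasurableSet.iUnion (fun k => hXsmeas k)
  have hGX : G ⊆ X := by
    intro x hx
    obtain ⟨k, _, hk⟩ := Set.mem_iUnion₂.mp hx
    exact hXssub k hk
  have hLX : L ⊆ X := by
    intro x hx
    obtain ⟨k, _, hk⟩ := Set.mem_iUnion₂.mp hx
    exact hXssub k hk
  have hUX : U ⊆ X := by
    intro x hx
    obtain ⟨k, hk⟩ := Set.mem_iUnion.mp hx
    exact hXssub k hk
  -- pointwise kernel-sum bound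
  have hsum_nn : ∀ x k, 0 ≤ ∑ j : Fin J, if idx j = k then 𝒦 (pts j) x else 0 := by
    intro x k
    refine Finset.sum_nonneg (fun j _ => ?_)
    by_cases h : idx j = k <;> simp [h, (h𝒦01 (pts j) x).1]
  have hsum_le : ∀ (x : Fin d → ℝ) (k : Fin K) (c : ℝ), 0 ≤ c →
      (∀ j, idx j = k → 𝒦 (pts j) x ≤ c) →
      (∑ j : Fin J, if idx j = k then 𝒦 (pts j) x else 0) ≤ c := by
    intro x k c hc hb
    have step1 : (∑ j : Fin J, if idx j = k then 𝒦 (pts j) x else 0)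
        ≤ ∑ j : Fin J, if idx j = k then c else 0 := by
      refine Finset.sum_le_sum (fun j _ => ?_)
      by_cases h : idx j = k <;> simp [h, hb j]
    have step2 : (∑ j : Fin J, if idx j = k then c else 0)
        = (Finset.univ.filter (fun j => idx j = k)).card • c := by
      rw [← Finset.sum_filter, Finset.sum_const]
    have step3 : (Finset.univ.filter (fun j => idx j = k)).card ≤ 1 := by
      refine Finset.card_le_one.mpr (fun a ha b hb2 => ?_)
      simp only [Finset.mem_filter] at ha hb2
      exact hidx (ha.2.trans hb2.2.symm)
    calc (∑ j : Fin J, if idx j = k then 𝒦 (pts j) x else 0)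
        ≤ (Finset.univ.filter (fun j => idx j = k)).card • c := step2 ▸ step1
      _ ≤ 1 • c := nsmul_le_nsmul_left hc step3
      _ = c := one_smul _ _
  -- pointwise α bounds
  have hα_lo : ∀ x k, α0 ≤ α x k := by
    intro x k; rw [hα x k]; linarith [hsum_nn x k]
  have hα_nn : ∀ x k, 0 ≤ α x k := fun x k => le_trans hα0.le (hα_lo x k)
  have hα_hi1 : ∀ x k, α x k ≤ α0 + 1 := by
    intro x k; rw [hα x k]
    have := hsum_le x k 1 zero_le_one (fun j _ => (h𝒦01 (pts j) x).2)
    linarith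
  have hα_sum_lo : ∀ x, (K:ℝ) * α0 ≤ ∑ k, α x k := by
    intro x
    calc (K:ℝ) * α0 = ∑ _k : Fin K, α0 := by simp [mul_comm]
      _ ≤ ∑ k, α x k := Finset.sum_le_sum (fun k _ => hα_lo x k)
  -- uniform (background) bound on dirVar
  have hVback : ∀ x, dirVar (α x) ≤ Aback := by
    intro x
    rw [hAback]
    have h := dirVar_le_upper (α x) (α0 + 1) ((K:ℝ) * α0) (hα_nn x) (hα_hi1 x)
      (by positivity) (hα_sum_lo x)
    calc dirVar (α x) ≤ (K:ℝ) * ((K:ℝ) - 1) * (α0+1)^2 / (((K:ℝ)*α0)^2 * ((K:ℝ)*α0 + 1)) := h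
      _ = _ := rfl
  -- lower bound on unlabeled (good) region
  have hVunl : ∀ x ∈ G, Aunl ≤ dirVar (α x) := by
    intro x hx
    obtain ⟨k', hk'mem, hk'⟩ := Set.mem_iUnion₂.mp hx
    have hk'nr : k' ∉ Set.range idx := hk'mem
    have hα_hiε : ∀ k, α x k ≤ α0 + ε := by
      intro k; rw [hα x k]
      have : ∀ j, idx j = k → 𝒦 (pts j) x ≤ ε := by
        intro j _
        have hne : idx j ≠ k' := fun h => hk'nr ⟨j, h⟩
        exact (hsepout (idx j) k' hne (pts j) (hpts j) x hk').le
      linarith [hsum_le x k ε hε0 this]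
    have h := dirVar_ge_lower (α x) α0 (α0 + ε) (hα_lo x) hα_hiε hα0
    rw [hAunl]
    have heq : ((K:ℝ) * (α0 + ε)) ^ 2 = (K:ℝ)^2 * (α0 + ε)^2 := by ring
    rw [← heq]
    exact h
  -- upper bound on labeled region
  have hVlab : ∀ x ∈ L, dirVar (α x) ≤ Alab := by
    intro x hx
    obtain ⟨k0, hk0mem, hk0⟩ := Set.mem_iUnion₂.mp hx
    obtain ⟨j0, rfl⟩ := hk0mem
    -- α at the labeled class is at least α0 + ζ
    have hbig : α0 + ζ ≤ α x (idx j0) := by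
      rw [hα x (idx j0)]
      have hterm : ζ ≤ (if idx j0 = idx j0 then 𝒦 (pts j0) x else 0) := by
        simp only [if_pos rfl]
        exact (hsepin (idx j0) (pts j0) (hpts j0) x hk0).le
      have := Finset.single_le_sum
        (f := fun j : Fin J => if idx j = idx j0 then 𝒦 (pts j) x else 0)
        (fun j _ => by by_cases h : idx j = idx j0 <;> simp [h, (h𝒦01 (pts j) x).1])
        (Finset.mem_univ j0)
      linarith
    have hα_hiε : ∀ k, k ≠ idx j0 → α x k ≤ α0 + ε := by
      intro k hkne; rw [hα x k]
      have : ∀ j, idx j = k → 𝒦 (pts j) x ≤ ε := by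
        intro j hj
        have hne : idx j ≠ idx j0 := by rw [hj]; exact hkne
        exact (hsepout (idx j) (idx j0) hne (pts j) (hpts j) x hk0).le
      linarith [hsum_le x k ε hε0 this]
    have hSlo : (K:ℝ) * α0 + ζ ≤ ∑ k, α x k := by
      have heq : ∑ j ∈ Finset.univ.erase (idx j0), α x j
          = (∑ k, α x k) - α x (idx j0) :=
        Finset.sum_erase_eq_sub (Finset.mem_univ (idx j0))
      have h2 := Finset.card_nsmul_le_sum (Finset.univ.erase (idx j0)) (α x) α0
        (fun j _ => hα_lo x j)
      have hc : (Finset.univ.erase (idx j0)).card = K - 1 := by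
        simp [Finset.card_erase_of_mem]
      rw [hc, heq] at h2
      have h3 : ((K - 1 : ℕ) : ℝ) * α0 ≤ (∑ k, α x k) - α x (idx j0) := by
        rw [← nsmul_eq_mul]; exact h2
      have h4 : ((K - 1 : ℕ) : ℝ) = (K:ℝ) - 1 := by
        rw [Nat.cast_sub (by omega), Nat.cast_one]
      rw [h4] at h3
      nlinarith [hbig]
    have h := dirVar_le_lab (α x) (idx j0) (α0 + 1) (α0 + ε) ((K:ℝ) * α0 + ζ)
      (hα_nn x) (hα_hi1 x (idx j0)) hα_hiε (by linarith) (by linarith)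
      (by positivity) hSlo
    rw [hAlab]
    have t1 : (0:ℝ) ≤ (K:ℝ) - 1 := by linarith
    have t2 : (0:ℝ) ≤ α0 + ε := by linarith
    have t3 : (0:ℝ) ≤ α0 + 1 := by linarith
    have e1 : (0:ℝ) ≤ ((K:ℝ) - 1) * (α0 + ε) * (α0 + 1) :=
      mul_nonneg (mul_nonneg t1 t2) t3
    have e2 : (0:ℝ) ≤ ((K:ℝ) - 1) * (α0 + ε) ^ 2 :=
      mul_nonneg t1 (sq_nonneg _)
    have e3 : (0:ℝ) ≤ (K:ℝ) * (((K:ℝ) - 1) * (α0 + ε) ^ 2) :=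
      mul_nonneg hKpos.le e2
    refine le_trans h (div_le_div₀ ?_ ?_ (by positivity) le_rfl)
    · nlinarith
    · nlinarith
  -- measurability
  have hαmeas : ∀ k, Measurable fun x => α x k := by
    intro k
    have : (fun x => α x k)
        = fun x => α0 + ∑ j : Fin J, if idx j = k then 𝒦 (pts j) x else 0 :=
      funext fun x => hα x k
    rw [this]
    refine Measurable.const_add ?_ _
    refine Finset.measurable_sum _ (fun j _ => ?_)
    by_cases h : idx j = k
    · simp only [h, if_true]
      exact h𝒦meas.comp measurable_prodMk_left
    · simp only [h, if_false]
      exact measurable_const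
  have hSmeas : Measurable fun x => ∑ k, α x k :=
    Finset.measurable_sum _ (fun k _ => hαmeas k)
  have hQmeas : Measurable fun x => ∑ k, (α x k) ^ 2 :=
    Finset.measurable_sum _ (fun k _ => (hαmeas k).pow_const 2)
  have hVmeas : Measurable fun x => dirVar (α x) := by
    unfold dirVar
    exact ((hSmeas.pow_const 2).sub hQmeas).div
      ((hSmeas.pow_const 2).mul (hSmeas.add_const 1))
  have hgmeas : Measurable g := (hVmeas.const_mul lam).exp
  have hgnn : ∀ x, 0 ≤ g x := fun x => (Real.exp_pos _).le
  have hρnn' : ∀ x, 0 ≤ ρ x := fun x =>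
    Finset.sum_nonneg (fun k _ => mul_nonneg (hwnn k) (hρnn k x))
  have hfnn : ∀ x, 0 ≤ g x * ρ x := fun x => mul_nonneg (hgnn x) (hρnn' x)
  -- integrability
  have hρcint : ∀ k, IntegrableOn (ρc k) X := by
    intro k
    by_contra h
    have := integral_undef h
    rw [hρprob k] at this
    norm_num at this
  have hρint : IntegrableOn ρ X := by
    refine integrable_finset_sum _ (fun k _ => ?_)
    exact (hρcint k).const_mul (w k)
  have hfint : IntegrableOn (fun x => g x * ρ x) X := by
    refine Integrable.bdd_mul (c := Real.exp (lam * Aback)) hρint (hgmeas.aestronglyMeasurable) ?_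
    refine Filter.Eventually.of_forall (fun x => ?_)
    rw [Real.norm_eq_abs, abs_of_pos (Real.exp_pos _)]
    exact Real.exp_le_exp.mpr (mul_le_mul_of_nonneg_left (hVback x) hlam.le)
  -- integral identities
  have hIX : ∫ x in X, ρ x = 1 := by
    rw [hρdef]
    rw [integral_finset_sum _ (fun k _ => (hρcint k).const_mul (w k))]
    have : ∀ k : Fin K, ∫ x in X, w k * ρc k x = w k := by
      intro k
      rw [integral_const_mul, hρprob k, mul_one]
    simp only [this, hwsum]
  have hXsρ : ∀ k, w k * (1 - δ) ≤ ∫ x in Xs k, ρ x := by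
    intro k
    have hint1 : IntegrableOn (fun x => w k * ρc k x) (Xs k) :=
      (((hρcint k).mono_set (hXssub k)).const_mul (w k))
    have hint2 : IntegrableOn ρ (Xs k) := hρint.mono_set (hXssub k)
    have hmono : ∫ x in Xs k, w k * ρc k x ≤ ∫ x in Xs k, ρ x := by
      refine setIntegral_mono_on hint1 hint2 (hXsmeas k) (fun x _ => ?_)
      exact Finset.single_le_sum
        (f := fun i => w i * ρc i x)
        (fun i _ => mul_nonneg (hwnn i) (hρnn i x)) (Finset.mem_univ k)
    have heq : ∫ x in Xs k, w k * ρc k x = w k * ∫ x in Xs k, ρc k x :=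
      integral_const_mul _ _
    have := mul_le_mul_of_nonneg_left (hXsmass k) (hwnn k)
    rw [heq] at hmono
    linarith
  have hUρ : 1 - δ ≤ ∫ x in U, ρ x := by
    have heq : ∫ x in U, ρ x = ∑' k, ∫ x in Xs k, ρ x :=
      integral_iUnion hXsmeas hXsdisj (hρint.mono_set hUX)
    rw [heq, tsum_fintype]
    calc (1:ℝ) - δ = ∑ k, w k * (1 - δ) := by
          rw [← Finset.sum_mul, hwsum, one_mul]
      _ ≤ ∑ k, ∫ x in Xs k, ρ x := Finset.sum_le_sum (fun k _ => hXsρ k)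
  have hGρ : wmin * (1 - δ) ≤ ∫ x in G, ρ x := by
    obtain ⟨k', hk'⟩ : ∃ k' : Fin K, k' ∉ Set.range idx := by
      by_contra h
      push_neg at h
      have hsurj : Function.Surjective idx := fun k => h k
      have := Fintype.card_le_of_surjective idx hsurj
      simp at this
      omega
    have hsub : Xs k' ⊆ G := by
      intro x hx
      exact Set.mem_iUnion₂.mpr ⟨k', hk', hx⟩
    have h1 : ∫ x in Xs k', ρ x ≤ ∫ x in G, ρ x :=
      setIntegral_mono_set (hρint.mono_set hGX)
        (Filter.Eventually.of_forall (fun x => hρnn' x))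
        (HasSubset.Subset.eventuallyLE hsub)
    have h2 := hXsρ k'
    have h3 : wmin * (1 - δ) ≤ w k' * (1 - δ) :=
      mul_le_mul_of_nonneg_right (hwminle k') (by linarith)
    linarith
  have hB0ρ : ∫ x in X \ U, ρ x ≤ δ := by
    rw [integral_diff hUm hρint hUX, hIX]
    linarith
  have hXGρ : ∫ x in X \ G, ρ x ≤ 1 - wmin * (1 - δ) := by
    rw [integral_diff hGm hρint hGX, hIX]
    linarith
  have hLsub : L ⊆ X \ G := by
    intro x hx
    obtain ⟨k, hkmem, hk⟩ := Set.mem_iUnion₂.mp hx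
    refine ⟨hXssub k hk, fun hxG => ?_⟩
    obtain ⟨k', hk'mem, hk'⟩ := Set.mem_iUnion₂.mp hxG
    have hne : k ≠ k' := fun h => hk'mem (h ▸ hkmem)
    exact (hXsdisj hne).le_bot ⟨hk, hk'⟩
  have hLρ : ∫ x in L, ρ x ≤ 1 - wmin * (1 - δ) := by
    refine le_trans ?_ hXGρ
    exact setIntegral_mono_set (hρint.mono_set (Set.diff_subset))
      (Filter.Eventually.of_forall (fun x => hρnn' x))
      (HasSubset.Subset.eventuallyLE hLsub)
  -- numerator bound
  have hBadsub : X \ G ⊆ (X \ U) ∪ L := by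
    intro x ⟨hxX, hxG⟩
    by_cases hxU : x ∈ U
    · obtain ⟨k, hk⟩ := Set.mem_iUnion.mp hxU
      right
      have hkr : k ∈ Set.range idx := by
        by_contra h
        exact hxG (Set.mem_iUnion₂.mpr ⟨k, h, hk⟩)
      exact Set.mem_iUnion₂.mpr ⟨k, hkr, hk⟩
    · exact Or.inl ⟨hxX, hxU⟩
  have hdisjB0L : Disjoint (X \ U) L := by
    rw [Set.disjoint_left]
    intro x hx hxL
    obtain ⟨k, _, hk⟩ := Set.mem_iUnion₂.mp hxL
    exact hx.2 (Set.mem_iUnion.mpr ⟨k, hk⟩)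
  have hNle1 : ∫ x in X \ G, g x * ρ x ≤ (∫ x in X \ U, g x * ρ x) + ∫ x in L, g x * ρ x := by
    have hintB0 : IntegrableOn (fun x => g x * ρ x) (X \ U) :=
      hfint.mono_set Set.diff_subset
    have hintL : IntegrableOn (fun x => g x * ρ x) L := hfint.mono_set hLX
    have h1 : ∫ x in X \ G, g x * ρ x ≤ ∫ x in (X \ U) ∪ L, g x * ρ x :=
      setIntegral_mono_set (hintB0.union hintL)
        (Filter.Eventually.of_forall (fun x => hfnn x))
        (HasSubset.Subset.eventuallyLE hBadsub)
    rw [setIntegral_union hdisjB0L hLm hintB0 hintL] at h1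
    exact h1
  have hNB0 : ∫ x in X \ U, g x * ρ x ≤ Real.exp (lam * Aback) * δ := by
    have hintB0 : IntegrableOn (fun x => g x * ρ x) (X \ U) :=
      hfint.mono_set Set.diff_subset
    have hint2 : IntegrableOn (fun x => Real.exp (lam * Aback) * ρ x) (X \ U) :=
      ((hρint.mono_set Set.diff_subset).const_mul _)
    have h1 : ∫ x in X \ U, g x * ρ x ≤ ∫ x in X \ U, Real.exp (lam * Aback) * ρ x := by
      refine setIntegral_mono_on hintB0 hint2 (hX.diff hUm) (fun x _ => ?_)
      refine mul_le_mul_of_nonneg_right ?_ (hρnn' x)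
      exact Real.exp_le_exp.mpr (mul_le_mul_of_nonneg_left (hVback x) hlam.le)
    rw [integral_const_mul] at h1
    calc ∫ x in X \ U, g x * ρ x ≤ Real.exp (lam * Aback) * ∫ x in X \ U, ρ x := h1
      _ ≤ Real.exp (lam * Aback) * δ :=
          mul_le_mul_of_nonneg_left hB0ρ (Real.exp_pos _).le
  have hNL : ∫ x in L, g x * ρ x ≤ Real.exp (lam * Alab) * (1 - wmin * (1 - δ)) := by
    have hintL : IntegrableOn (fun x => g x * ρ x) L := hfint.mono_set hLX
    have hint2 : IntegrableOn (fun x => Real.exp (lam * Alab) * ρ x) L :=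
      ((hρint.mono_set hLX).const_mul _)
    have h1 : ∫ x in L, g x * ρ x ≤ ∫ x in L, Real.exp (lam * Alab) * ρ x := by
      refine setIntegral_mono_on hintL hint2 hLm (fun x hx => ?_)
      refine mul_le_mul_of_nonneg_right ?_ (hρnn' x)
      exact Real.exp_le_exp.mpr (mul_le_mul_of_nonneg_left (hVlab x hx) hlam.le)
    rw [integral_const_mul] at h1
    calc ∫ x in L, g x * ρ x ≤ Real.exp (lam * Alab) * ∫ x in L, ρ x := h1
      _ ≤ Real.exp (lam * Alab) * (1 - wmin * (1 - δ)) :=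
          mul_le_mul_of_nonneg_left hLρ (Real.exp_pos _).le
  -- denominator bound
  have hDge : Real.exp (lam * Aunl) * (wmin * (1 - δ)) ≤ ∫ x in X, g x * ρ x := by
    have hintG : IntegrableOn (fun x => g x * ρ x) G := hfint.mono_set hGX
    have hint2 : IntegrableOn (fun x => Real.exp (lam * Aunl) * ρ x) G :=
      ((hρint.mono_set hGX).const_mul _)
    have h1 : ∫ x in G, Real.exp (lam * Aunl) * ρ x ≤ ∫ x in G, g x * ρ x := by
      refine setIntegral_mono_on hint2 hintG hGm (fun x hx => ?_)
      refine mul_le_mul_of_nonneg_right ?_ (hρnn' x)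
      exact Real.exp_le_exp.mpr (mul_le_mul_of_nonneg_left (hVunl x hx) hlam.le)
    rw [integral_const_mul] at h1
    have h2 : ∫ x in G, g x * ρ x ≤ ∫ x in X, g x * ρ x :=
      setIntegral_mono_set hfint
        (Filter.Eventually.of_forall (fun x => hfnn x))
        (HasSubset.Subset.eventuallyLE hGX)
    have h3 : Real.exp (lam * Aunl) * (wmin * (1 - δ))
        ≤ Real.exp (lam * Aunl) * ∫ x in G, ρ x :=
      mul_le_mul_of_nonneg_left hGρ (Real.exp_pos _).le
    linarith
  have hDpos : 0 < ∫ x in X, g x * ρ x := by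
    have : 0 < Real.exp (lam * Aunl) * (wmin * (1 - δ)) :=
      mul_pos (Real.exp_pos _) (mul_pos hwminpos (by linarith))
    linarith
  -- conclude
  have hwmin1 : wmin ≤ 1 := by
    obtain ⟨k0, hk0⟩ := hwminmem
    have h1 : w k0 ≤ ∑ k, w k :=
      Finset.single_le_sum (fun k _ => hwnn k) (Finset.mem_univ k0)
    rw [hwsum] at h1
    linarith [hwminle k0, hk0 ▸ h1]
  have hcoef : 0 ≤ 1 - wmin * (1 - δ) := by nlinarith
  have hmain : (∫ x in X \ G, g x * ρ x) / (∫ x in X, g x * ρ x)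
      ≤ (Real.exp (lam * Aback) * δ + Real.exp (lam * Alab) * (1 - wmin * (1 - δ)))
        / (Real.exp (lam * Aunl) * (wmin * (1 - δ))) := by
    refine div_le_div₀ ?_ (by linarith) (mul_pos (Real.exp_pos _) (mul_pos hwminpos (by linarith))) hDge
    have := Real.exp_pos (lam * Aback)
    have := Real.exp_pos (lam * Alab)
    nlinarith
  refine le_trans hmain ?_
  have heq : (Real.exp (lam * Aback) * δ + Real.exp (lam * Alab) * (1 - wmin * (1 - δ)))
        / (Real.exp (lam * Aunl) * (wmin * (1 - δ)))
      = δ / ((1 - δ) * wmin) * Real.exp (lam * (Aback - Aunl))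
        + (1 - wmin * (1 - δ)) / ((1 - δ) * wmin) * Real.exp (lam * (Alab - Aunl)) := by
    rw [mul_sub lam Aback Aunl, mul_sub lam Alab Aunl, Real.exp_sub, Real.exp_sub]
    have h1 : Real.exp (lam * Aunl) ≠ 0 := (Real.exp_pos _).ne'
    have h2 : wmin ≠ 0 := hwminpos.ne'
    have h3 : (1:ℝ) - δ ≠ 0 := by linarith
    field_simp
  rw [heq]
end

section
/- Let K ≥ 2, α_0 > 0, and 0 ≤ ε, ζ ≤ 1. Suppose α ∈ ℝ^K satisfies α_i ≥ α_0 for all i, and there is an index k* with α_0 + ζ ≤ α_{k*} ≤ α_0 + 1 while α_i ≤ α_0 + ε for all i ≠ k*. Then the Dirichlet variance satisfies V(α) ≤ [4(K−1)(α_0+ε)(α_0+1) + K(K−1)(α_0+ε)²] / [(Kα_0+ζ)²(Kα_0+ζ+1)]. -/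
set_option maxHeartbeats 1000000 in
/-- Upper bound on the Dirichlet variance at a point of an already-labeled cluster:
one coordinate is at least `α₀ + ζ` (and at most `α₀ + 1`), all others lie in
`[α₀, α₀ + ε]`. -/
theorem stmt2 (K : ℕ) (hK : 2 ≤ K) (α0 ε ζ : ℝ) (hα0 : 0 < α0)
    (hε0 : 0 ≤ ε) (hε1 : ε ≤ 1) (hζ0 : 0 ≤ ζ) (hζ1 : ζ ≤ 1)
    (α : Fin K → ℝ) (hlow : ∀ i, α0 ≤ α i)
    (kstar : Fin K) (hk1 : α0 + ζ ≤ α kstar) (hk2 : α kstar ≤ α0 + 1)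
    (hother : ∀ i, i ≠ kstar → α i ≤ α0 + ε) :
    dirVar α ≤
      (4 * ((K : ℝ) - 1) * (α0 + ε) * (α0 + 1) + (K : ℝ) * ((K : ℝ) - 1) * (α0 + ε) ^ 2)
        / (((K : ℝ) * α0 + ζ) ^ 2 * ((K : ℝ) * α0 + ζ + 1)) := by
  have hKR : (2 : ℝ) ≤ (K : ℝ) := by exact_mod_cast hK
  set S : ℝ := ∑ k ∈ Finset.univ.erase kstar, α k with hSdef
  have hsplit : ∑ k, α k = α kstar + S := by
    rw [hSdef, Finset.add_sum_erase _ _ (Finset.mem_univ kstar)]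
  have hcard : ((Finset.univ.erase kstar).card : ℝ) = (K : ℝ) - 1 := by
    rw [Finset.card_erase_of_mem (Finset.mem_univ kstar), Finset.card_univ, Fintype.card_fin]
    have : 1 ≤ K := by omega
    push_cast [Nat.cast_sub this]
    ring
  have hSub : S ≤ ((K : ℝ) - 1) * (α0 + ε) := by
    have := Finset.sum_le_card_nsmul (Finset.univ.erase kstar) α (α0 + ε)
      (fun i hi => hother i (Finset.ne_of_mem_erase hi))
    rw [nsmul_eq_mul, hcard] at this
    exact this
  have hSlb : ((K : ℝ) - 1) * α0 ≤ S := by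
    have := Finset.card_nsmul_le_sum (Finset.univ.erase kstar) α α0
      (fun i _ => hlow i)
    rw [nsmul_eq_mul, hcard] at this
    exact this
  have hS0 : 0 ≤ S := le_trans (by nlinarith) hSlb
  have hβlb : (K : ℝ) * α0 + ζ ≤ α kstar + S := by nlinarith
  have hdpos : 0 < ((K : ℝ) * α0 + ζ) ^ 2 * ((K : ℝ) * α0 + ζ + 1) := by
    have : 0 < (K : ℝ) * α0 + ζ := by nlinarith
    positivity
  have hsq : (α kstar) ^ 2 ≤ ∑ k, (α k) ^ 2 :=
    Finset.single_le_sum (f := fun k => (α k) ^ 2) (fun i _ => sq_nonneg _)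
      (Finset.mem_univ kstar)
  have hN : (∑ k, α k) ^ 2 - ∑ k, (α k) ^ 2 ≤
      4 * ((K : ℝ) - 1) * (α0 + ε) * (α0 + 1) + (K : ℝ) * ((K : ℝ) - 1) * (α0 + ε) ^ 2 := by
    rw [hsplit]
    have h1 : (α kstar + S) ^ 2 - ∑ k, (α k) ^ 2 ≤ 2 * α kstar * S + S ^ 2 := by
      nlinarith
    have h2 : 2 * α kstar * S + S ^ 2 ≤
        4 * ((K : ℝ) - 1) * (α0 + ε) * (α0 + 1) + (K : ℝ) * ((K : ℝ) - 1) * (α0 + ε) ^ 2 := by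
      have ha : 0 ≤ α0 + ε := by linarith
      have hb : 0 ≤ α0 + 1 := by linarith
      have hkstar0 : 0 ≤ α kstar := le_trans hα0.le (hlow kstar)
      nlinarith [mul_le_mul hSub hSub hS0 (by nlinarith : (0:ℝ) ≤ ((K:ℝ)-1)*(α0+ε)),
        mul_le_mul hk2 hSub hS0 hb]
    linarith
  have hD : ((K : ℝ) * α0 + ζ) ^ 2 * ((K : ℝ) * α0 + ζ + 1) ≤
      (∑ k, α k) ^ 2 * ((∑ k, α k) + 1) := by
    rw [hsplit]
    have h0 : 0 < (K : ℝ) * α0 + ζ := by nlinarith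
    have hsqle : ((K : ℝ) * α0 + ζ) ^ 2 ≤ (α kstar + S) ^ 2 :=
      pow_le_pow_left₀ h0.le hβlb 2
    have h1 : ((K : ℝ) * α0 + ζ + 1) ≤ (α kstar + S) + 1 := by linarith
    exact mul_le_mul hsqle h1 (by linarith) (sq_nonneg _)
  have hNb0 : 0 ≤ 4 * ((K : ℝ) - 1) * (α0 + ε) * (α0 + 1) +
      (K : ℝ) * ((K : ℝ) - 1) * (α0 + ε) ^ 2 := by nlinarith [sq_nonneg (α0 + ε)]
  exact div_le_div₀ hNb0 hN hdpos hD
end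

section
/- Let E be a real inner product space, let e and e' be orthogonal unit vectors, and let θ ∈ (0, π/4). Suppose z, z' ∈ E satisfy ⟨z, e⟩ ≥ cos(θ)‖z‖, ⟨z', e'⟩ ≥ cos(θ)‖z'‖, and ‖z‖ ≤ R, ‖z'‖ ≤ R for some R > 0. Then |⟨z, z'⟩| ≤ R² cos(π/2 − 2θ). -/
set_option maxHeartbeats 1000000

open scoped RealInnerProductSpace


lemma stepB (s c x y u v ax vy : ℝ) (hs : 0 < s) (hsc : s ≤ c) (hc1 : c^2 + s^2 = 1)
    (hx : 0 < x) (hy : 0 < y) (hu0 : 0 ≤ u) (hv0 : 0 ≤ v)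
    (husx : u ≤ s*x) (hvsy : v ≤ s*y)
    (hax0 : 0 ≤ ax) (hvy0 : 0 ≤ vy)
    (hax2 : ax^2 = x^2 - u^2) (hvy2 : vy^2 = y^2 - v^2)
    (haxcx : c*x ≤ ax) (hvycy : c*y ≤ vy) :
    ax*v + u*vy ≤ 2*s*c*x*y := by
  have hc : 0 < c := lt_of_lt_of_le hs hsc
  have hss : s*s ≤ c*c := mul_self_le_mul_self hs.le hsc
  have hss2 : (2*x*y)*(s*s) ≤ (2*x*y)*(c*c) :=
    mul_le_mul_of_nonneg_left hss (by positivity)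
  have hsxv : s*x*v ≤ s*x*(s*y) := mul_le_mul_of_nonneg_left hvsy (by positivity)
  have huv : u*v ≤ (s*x)*(s*y) := mul_le_mul husx hvsy hv0 (by positivity)
  have hax2' : (s^2*x^2 - u^2)*v = (ax^2 - c^2*x^2)*v := by
    have : s^2*x^2 - u^2 = ax^2 - c^2*x^2 := by linear_combination x^2 * hc1 - hax2
    rw [this]
  have hvy2' : (s^2*y^2 - v^2)*(s*x) = (vy^2 - c^2*y^2)*(s*x) := by
    have : s^2*y^2 - v^2 = vy^2 - c^2*y^2 := by linear_combination y^2 * hc1 - hvy2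
    rw [this]
  have b1 : (ax - c*x)*v ≤ (s*x - u)*vy := by
    have hd : (0:ℝ) < ax + c*x := by positivity
    have h7 : (s*x + u)*v ≤ vy*(ax + c*x) := by
      have h9 : (c*y)*(c*x + c*x) ≤ vy*(ax + c*x) :=
        mul_le_mul hvycy (by linarith) (by positivity) hvy0
      linarith [h9, hsxv, huv, hss2]
    have h8 : (s*x - u)*((s*x + u)*v) ≤ (s*x - u)*(vy*(ax + c*x)) :=
      mul_le_mul_of_nonneg_left h7 (by linarith)
    apply le_of_mul_le_mul_right _ hd
    linarith [h8, hax2']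
  have b2 : c*x*v + s*x*vy ≤ 2*s*c*x*y := by
    have hd : (0:ℝ) < vy + c*y := by positivity
    have h7 : s*x*(s*y + v) ≤ c*x*(vy + c*y) := by
      have h9 : (c*x)*(c*y + c*y) ≤ (c*x)*(vy + c*y) :=
        mul_le_mul_of_nonneg_left (by linarith) (by positivity)
      linarith [h9, hsxv, hss2]
    have h8 : (s*y - v)*(s*x*(s*y + v)) ≤ (s*y - v)*(c*x*(vy + c*y)) :=
      mul_le_mul_of_nonneg_left h7 (by linarith)
    have goal' : (s*x*(vy - c*y))*(vy + c*y) ≤ (c*x*(s*y - v))*(vy + c*y) := by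
      linarith [h8, hvy2']
    have := le_of_mul_le_mul_right goal' hd
    linarith [this]
  linarith [b1, b2]

lemma key (s c x y a B T A' b' T' : ℝ) (hs : 0 < s) (hsc : s ≤ c) (hc1 : c^2 + s^2 = 1)
    (hx : 0 < x) (hy : 0 < y) (hB : 0 ≤ B) (hT : 0 ≤ T) (hA' : 0 ≤ A') (hT' : 0 ≤ T')
    (h3 : c*x ≤ a) (h4 : c*y ≤ b')
    (h1 : a^2 + B^2 + T^2 ≤ x^2) (h2 : A'^2 + b'^2 + T'^2 ≤ y^2) :
    a*A' + B*b' + T*T' ≤ 2*s*c*x*y := by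
  have hc : 0 < c := lt_of_lt_of_le hs hsc
  have ha : 0 < a := lt_of_lt_of_le (by positivity) h3
  have hb' : 0 < b' := lt_of_lt_of_le (by positivity) h4
  have ha2 : (c*x)^2 ≤ a^2 := pow_le_pow_left₀ (by positivity) h3 2
  have hb'2 : (c*y)^2 ≤ b'^2 := pow_le_pow_left₀ (by positivity) h4 2
  have hcx2 : c^2*x^2 + s^2*x^2 = x^2 := by linear_combination x^2 * hc1
  have hcy2 : c^2*y^2 + s^2*y^2 = y^2 := by linear_combination y^2 * hc1
  set u := Real.sqrt (B^2 + T^2) with hud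
  set v := Real.sqrt (A'^2 + T'^2) with hvd
  have hu0 : 0 ≤ u := Real.sqrt_nonneg _
  have hv0 : 0 ≤ v := Real.sqrt_nonneg _
  have hu2 : u^2 = B^2 + T^2 := Real.sq_sqrt (by positivity)
  have hv2 : v^2 = A'^2 + T'^2 := Real.sq_sqrt (by positivity)
  have husx : u ≤ s*x := by
    rw [hud]
    calc Real.sqrt (B^2+T^2) ≤ Real.sqrt ((s*x)^2) := by
          apply Real.sqrt_le_sqrt; linarith [ha2, hcx2, h1]
      _ = s*x := Real.sqrt_sq (by positivity)
  have hvsy : v ≤ s*y := by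
    rw [hvd]
    calc Real.sqrt (A'^2+T'^2) ≤ Real.sqrt ((s*y)^2) := by
          apply Real.sqrt_le_sqrt; linarith [hb'2, hcy2, h2]
      _ = s*y := Real.sqrt_sq (by positivity)
  have hBu : B ≤ u := by
    rw [hud]
    calc B = Real.sqrt (B^2) := (Real.sqrt_sq hB).symm
      _ ≤ Real.sqrt (B^2+T^2) := Real.sqrt_le_sqrt (by linarith [sq_nonneg T])
  have hA'v : A' ≤ v := by
    rw [hvd]
    calc A' = Real.sqrt (A'^2) := (Real.sqrt_sq hA').symm
      _ ≤ Real.sqrt (A'^2+T'^2) := Real.sqrt_le_sqrt (by linarith [sq_nonneg T'])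
  clear_value u v
  clear hud hvd
  have hu2' : u^2 ≤ s^2*x^2 := by
    have := mul_self_le_mul_self hu0 husx
    linarith [this]
  have hv2' : v^2 ≤ s^2*y^2 := by
    have := mul_self_le_mul_self hv0 hvsy
    linarith [this]
  have hxu : u^2 ≤ x^2 := by linarith [sq_nonneg c, sq_nonneg x, hcx2, hu2', sq_nonneg (c*x)]
  have hyv : v^2 ≤ y^2 := by linarith [hcy2, hv2', sq_nonneg (c*y)]
  set ax := Real.sqrt (x^2 - u^2) with haxd
  set vy := Real.sqrt (y^2 - v^2) with hvyd
  have hax0 : 0 ≤ ax := Real.sqrt_nonneg _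
  have hvy0 : 0 ≤ vy := Real.sqrt_nonneg _
  have hax2 : ax^2 = x^2 - u^2 := Real.sq_sqrt (by linarith)
  have hvy2 : vy^2 = y^2 - v^2 := Real.sq_sqrt (by linarith)
  have haax : a ≤ ax := by
    rw [haxd]
    calc a = Real.sqrt (a^2) := (Real.sqrt_sq ha.le).symm
      _ ≤ Real.sqrt (x^2 - u^2) := Real.sqrt_le_sqrt (by linarith [hu2, h1])
  have hb'vy : b' ≤ vy := by
    rw [hvyd]
    calc b' = Real.sqrt (b'^2) := (Real.sqrt_sq hb'.le).symm
      _ ≤ Real.sqrt (y^2 - v^2) := Real.sqrt_le_sqrt (by linarith [hv2, h2])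
  have haxcx : c*x ≤ ax := by
    rw [haxd]
    calc c*x = Real.sqrt ((c*x)^2) := (Real.sqrt_sq (by positivity)).symm
      _ ≤ Real.sqrt (x^2 - u^2) := Real.sqrt_le_sqrt (by linarith [hu2', hcx2])
  have hvycy : c*y ≤ vy := by
    rw [hvyd]
    calc c*y = Real.sqrt ((c*y)^2) := (Real.sqrt_sq (by positivity)).symm
      _ ≤ Real.sqrt (y^2 - v^2) := Real.sqrt_le_sqrt (by linarith [hv2', hcy2])
  clear_value ax vy
  clear haxd hvyd
  -- Step A:  T*T' ≤ ax*(v - A') + vy*(u - B)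
  have h5 : T'^2 ≤ (v - A') * (2*s*y) := by
    have hh : (v - A')*(v + A') ≤ (v - A')*(s*y + s*y) :=
      mul_le_mul_of_nonneg_left (add_le_add hvsy (le_trans hA'v hvsy)) (sub_nonneg.2 hA'v)
    linarith [hh, hv2, sq_nonneg T']
  have h6 : T^2 ≤ (u - B) * (2*s*x) := by
    have hh : (u - B)*(u + B) ≤ (u - B)*(s*x + s*x) :=
      mul_le_mul_of_nonneg_left (add_le_add husx (le_trans hBu husx)) (sub_nonneg.2 hBu)
    linarith [hh, hu2, sq_nonneg T]
  have stepA : T*T' ≤ ax*(v - A') + vy*(u - B) := by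
    have key' : 2*s*x*y*(T*T') ≤ 2*s*x*y*(ax*(v - A') + vy*(u - B)) := by
      have e1 : c*x^2*T'^2 ≤ c*x^2*((v - A') * (2*s*y)) :=
        mul_le_mul_of_nonneg_left h5 (by positivity)
      have e2 : c*y^2*T^2 ≤ c*y^2*((u - B) * (2*s*x)) :=
        mul_le_mul_of_nonneg_left h6 (by positivity)
      have e3 : 2*s*x*y*(c*x*(v-A')) ≤ 2*s*x*y*(ax*(v-A')) :=
        mul_le_mul_of_nonneg_left
          (mul_le_mul_of_nonneg_right haxcx (by linarith)) (by positivity)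
      have e4 : 2*s*x*y*(c*y*(u-B)) ≤ 2*s*x*y*(vy*(u-B)) :=
        mul_le_mul_of_nonneg_left
          (mul_le_mul_of_nonneg_right hvycy (by linarith)) (by positivity)
      have amgm : 2*c*x*y*(T*T') ≤ c*x^2*T'^2 + c*y^2*T^2 := by
        have := mul_nonneg hc.le (sq_nonneg (x*T' - y*T))
        linarith [this]
      have hcs : 2*s*x*y*(T*T') ≤ 2*c*x*y*(T*T') := by
        have := mul_nonneg (mul_nonneg (mul_nonneg (sub_nonneg.2 hsc) hx.le) hy.le)
          (mul_nonneg hT hT')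
        linarith [this]
      linarith [e1, e2, e3, e4, amgm, hcs]
    exact le_of_mul_le_mul_left key' (by positivity)
  have main : ax*v + u*vy ≤ 2*s*c*x*y :=
    stepB s c x y u v ax vy hs hsc hc1 hx hy hu0 hv0 husx hvsy hax0 hvy0 hax2 hvy2 haxcx hvycy
  have step1 : a*A' + B*b' + T*T' ≤ ax*A' + B*vy + T*T' := by
    have q1 := mul_le_mul_of_nonneg_right haax hA'
    have q2 := mul_le_mul_of_nonneg_left hb'vy hB
    linarith
  have step2 : ax*A' + B*vy + T*T' ≤ ax*v + u*vy := by linarith [stepA]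
  linarith

/-- Two vectors lying in cones of angle `θ < π/4` about two *orthogonal* unit directions,
each of norm at most `R`, have inner product of absolute value at most `R² cos(π/2 − 2θ)`. -/
theorem stmt13 {E : Type*} [NormedAddCommGroup E] [InnerProductSpace ℝ E]
    (e e' : E) (he : ‖e‖ = 1) (he' : ‖e'‖ = 1) (horth : ⟪e, e'⟫ = 0)
    (θ R : ℝ) (hθ : θ ∈ Set.Ioo 0 (Real.pi / 4)) (hR : 0 < R)
    (z z' : E)
    (hz : Real.cos θ * ‖z‖ ≤ ⟪z, e⟫) (hz' : Real.cos θ * ‖z'‖ ≤ ⟪z', e'⟫)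
    (hzR : ‖z‖ ≤ R) (hz'R : ‖z'‖ ≤ R) :
    |⟪z, z'⟫| ≤ R ^ 2 * Real.cos (Real.pi / 2 - 2 * θ) := by
  obtain ⟨hθ0, hθ4⟩ := hθ
  have hpi := Real.pi_pos
  have hs : 0 < Real.sin θ := Real.sin_pos_of_pos_of_lt_pi hθ0 (by linarith)
  have hsc : Real.sin θ ≤ Real.cos θ := by
    rw [← Real.cos_pi_div_two_sub θ]
    exact Real.cos_le_cos_of_nonneg_of_le_pi hθ0.le (by linarith) (by linarith)
  have hc : 0 < Real.cos θ := lt_of_lt_of_le hs hsc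
  have hc1 : (Real.cos θ)^2 + (Real.sin θ)^2 = 1 := Real.cos_sq_add_sin_sq θ
  have hRHS : Real.cos (Real.pi/2 - 2*θ) = 2 * Real.sin θ * Real.cos θ := by
    rw [Real.cos_pi_div_two_sub, Real.sin_two_mul]
  rw [hRHS]
  by_cases hz0 : z = 0
  · simp only [hz0, inner_zero_left, abs_zero]
    positivity
  by_cases hz'0 : z' = 0
  · simp only [hz'0, inner_zero_right, abs_zero]
    positivity
  have hx : 0 < ‖z‖ := norm_pos_iff.2 hz0
  have hy : 0 < ‖z'‖ := norm_pos_iff.2 hz'0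
  have hee : ⟪e, e⟫ = 1 := by rw [real_inner_self_eq_norm_sq, he]; norm_num
  have he'e' : ⟪e', e'⟫ = 1 := by rw [real_inner_self_eq_norm_sq, he']; norm_num
  have he'e : ⟪e', e⟫ = 0 := by rw [real_inner_comm]; exact horth
  set w : E := z - ⟪z, e⟫ • e - ⟪z, e'⟫ • e' with hwdef
  set w' : E := z' - ⟪z', e⟫ • e - ⟪z', e'⟫ • e' with hw'def
  have hexp : ⟪w, w'⟫ = ⟪z, z'⟫ - ⟪z, e⟫ * ⟪z', e⟫ - ⟪z, e'⟫ * ⟪z', e'⟫ := by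
    simp only [hwdef, hw'def, inner_sub_left, inner_sub_right, real_inner_smul_left,
      real_inner_smul_right, hee, he'e', horth, he'e,
      real_inner_comm e z', real_inner_comm e' z']
    ring
  have hw2 : ‖w‖^2 = ‖z‖^2 - ⟪z, e⟫^2 - ⟪z, e'⟫^2 := by
    rw [← real_inner_self_eq_norm_sq, ← real_inner_self_eq_norm_sq]
    simp only [hwdef, inner_sub_left, inner_sub_right, real_inner_smul_left,
      real_inner_smul_right, hee, he'e', horth, he'e,
      real_inner_comm e z, real_inner_comm e' z]
    ring
  have hw'2 : ‖w'‖^2 = ‖z'‖^2 - ⟪z', e⟫^2 - ⟪z', e'⟫^2 := by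
    rw [← real_inner_self_eq_norm_sq, ← real_inner_self_eq_norm_sq]
    simp only [hw'def, inner_sub_left, inner_sub_right, real_inner_smul_left,
      real_inner_smul_right, hee, he'e', horth, he'e,
      real_inner_comm e z', real_inner_comm e' z']
    ring
  have hkey := key (Real.sin θ) (Real.cos θ) ‖z‖ ‖z'‖ ⟪z, e⟫ |⟪z, e'⟫| ‖w‖ |⟪z', e⟫|
    ⟪z', e'⟫ ‖w'‖ hs hsc hc1 hx hy (abs_nonneg _) (norm_nonneg _) (abs_nonneg _)
    (norm_nonneg _) hz hz'
    (by rw [sq_abs]; linarith [hw2])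
    (by rw [sq_abs]; linarith [hw'2])
  have ha : 0 < ⟪z, e⟫ := lt_of_lt_of_le (by positivity) hz
  have hb' : 0 < ⟪z', e'⟫ := lt_of_lt_of_le (by positivity) hz'
  have habs : |⟪z, z'⟫| ≤ ⟪z, e⟫ * |⟪z', e⟫| + |⟪z, e'⟫| * ⟪z', e'⟫ + ‖w‖ * ‖w'‖ := by
    have h1 : ⟪z, z'⟫ = ⟪z, e⟫ * ⟪z', e⟫ + ⟪z, e'⟫ * ⟪z', e'⟫ + ⟪w, w'⟫ := by
      rw [hexp]; ring
    rw [h1]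
    calc |⟪z, e⟫ * ⟪z', e⟫ + ⟪z, e'⟫ * ⟪z', e'⟫ + ⟪w, w'⟫|
        ≤ |⟪z, e⟫ * ⟪z', e⟫| + |⟪z, e'⟫ * ⟪z', e'⟫| + |⟪w, w'⟫| := by
          exact (abs_add_le _ _).trans (by gcongr; exact abs_add_le _ _)
      _ ≤ ⟪z, e⟫ * |⟪z', e⟫| + |⟪z, e'⟫| * ⟪z', e'⟫ + ‖w‖ * ‖w'‖ := by
          rw [abs_mul, abs_mul, abs_of_pos ha, abs_of_pos hb']
          exact add_le_add (le_refl _) (abs_real_inner_le_norm w w')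
  have hfin : 2 * Real.sin θ * Real.cos θ * (‖z‖ * ‖z'‖) ≤
      2 * Real.sin θ * Real.cos θ * (R * R) := by
    apply mul_le_mul_of_nonneg_left _ (by positivity)
    exact mul_le_mul hzR hz'R hy.le hR.le
  calc |⟪z, z'⟫| ≤ ⟪z, e⟫ * |⟪z', e⟫| + |⟪z, e'⟫| * ⟪z', e'⟫ + ‖w‖ * ‖w'‖ := habs
    _ ≤ 2 * Real.sin θ * Real.cos θ * ‖z‖ * ‖z'‖ := hkey
    _ ≤ R ^ 2 * (2 * Real.sin θ * Real.cos θ) := by nlinarith [hfin]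
end

section
/- Let E be a real inner product space, let e be a unit vector, and let θ ∈ (0, π/4). Suppose z, z' ∈ E satisfy ⟨z, e⟩ ≥ cos(θ)‖z‖ and ⟨z', e⟩ ≥ cos(θ)‖z'‖, with r ≤ ‖z‖ ≤ R and r ≤ ‖z'‖ ≤ R for some 0 < r ≤ R. Then r² cos(2θ) ≤ ⟨z, z'⟩ ≤ R². -/
open scoped RealInnerProductSpace

set_option maxHeartbeats 1000000 in
/-- Two vectors lying in a common cone of angle `θ < π/4` about a unit direction, with norms in
the annulus `[r, R]`, have inner product between `r² cos(2θ)` and `R²`. -/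
theorem stmt14 {E : Type*} [NormedAddCommGroup E] [InnerProductSpace ℝ E]
    (e : E) (he : ‖e‖ = 1)
    (θ r R : ℝ) (hθ : θ ∈ Set.Ioo 0 (Real.pi / 4)) (hr : 0 < r) (hrR : r ≤ R)
    (z z' : E)
    (hz : Real.cos θ * ‖z‖ ≤ ⟪z, e⟫) (hz' : Real.cos θ * ‖z'‖ ≤ ⟪z', e⟫)
    (hzr : r ≤ ‖z‖) (hzR : ‖z‖ ≤ R) (hz'r : r ≤ ‖z'‖) (hz'R : ‖z'‖ ≤ R) :
    r ^ 2 * Real.cos (2 * θ) ≤ ⟪z, z'⟫ ∧ ⟪z, z'⟫ ≤ R ^ 2 := by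
  obtain ⟨hθ0, hθ4⟩ := hθ
  have hcos : 0 < Real.cos θ := Real.cos_pos_of_mem_Ioo ⟨by linarith [Real.pi_pos], by linarith⟩
  have hsin : 0 < Real.sin θ := Real.sin_pos_of_pos_of_lt_pi hθ0 (by linarith [Real.pi_pos])
  have hcos2 : 0 < Real.cos (2 * θ) :=
    Real.cos_pos_of_mem_Ioo ⟨by linarith [Real.pi_pos], by linarith⟩
  have hee : ⟪e, e⟫ = 1 := by
    have := real_inner_self_eq_norm_sq e; rw [he] at this; simpa using this
  -- decomposition
  have hdecomp : ⟪z - ⟪z, e⟫ • e, z' - ⟪z', e⟫ • e⟫ = ⟪z, z'⟫ - ⟪z, e⟫ * ⟪z', e⟫ := by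
    simp only [inner_sub_left, inner_sub_right, real_inner_smul_left, real_inner_smul_right, hee,
      real_inner_comm e z']
    ring
  have hnw : ‖z - ⟪z, e⟫ • e‖ ^ 2 = ‖z‖ ^ 2 - ⟪z, e⟫ ^ 2 := by
    rw [← real_inner_self_eq_norm_sq, ← real_inner_self_eq_norm_sq]
    simp only [inner_sub_left, inner_sub_right, real_inner_smul_left, real_inner_smul_right, hee,
      real_inner_comm e z]
    ring
  have hnw' : ‖z' - ⟪z', e⟫ • e‖ ^ 2 = ‖z'‖ ^ 2 - ⟪z', e⟫ ^ 2 := by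
    rw [← real_inner_self_eq_norm_sq, ← real_inner_self_eq_norm_sq]
    simp only [inner_sub_left, inner_sub_right, real_inner_smul_left, real_inner_smul_right, hee,
      real_inner_comm e z']
    ring
  have hcs : |⟪z - ⟪z, e⟫ • e, z' - ⟪z', e⟫ • e⟫| ≤ ‖z - ⟪z, e⟫ • e‖ * ‖z' - ⟪z', e⟫ • e‖ :=
    abs_real_inner_le_norm _ _
  -- pass to real variables
  obtain ⟨a, ha⟩ : ∃ a : ℝ, a = ⟪z, e⟫ := ⟨_, rfl⟩
  obtain ⟨a', ha'⟩ : ∃ a : ℝ, a = ⟪z', e⟫ := ⟨_, rfl⟩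
  obtain ⟨p, hp⟩ : ∃ p : ℝ, p = ⟪z, z'⟫ := ⟨_, rfl⟩
  obtain ⟨u, hu⟩ : ∃ u : ℝ, u = ‖z - ⟪z, e⟫ • e‖ := ⟨_, rfl⟩
  obtain ⟨u', hu'⟩ : ∃ u : ℝ, u = ‖z' - ⟪z', e⟫ • e‖ := ⟨_, rfl⟩
  rw [← ha] at hz hnw hu hcs hdecomp
  rw [← ha'] at hz' hnw' hu' hcs hdecomp
  rw [← hp] at hdecomp ⊢
  rw [← hu] at hcs hnw
  rw [← hu'] at hcs hnw'
  have hu0 : 0 ≤ u := hu ▸ norm_nonneg _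
  have hu'0 : 0 ≤ u' := hu' ▸ norm_nonneg _
  have hnz : 0 ≤ ‖z‖ := norm_nonneg z
  have hnz' : 0 ≤ ‖z'‖ := norm_nonneg z'
  have hpyth : Real.sin θ ^ 2 + Real.cos θ ^ 2 = 1 := Real.sin_sq_add_cos_sq θ
  -- bounds on orthogonal parts
  have hub : u ≤ Real.sin θ * ‖z‖ := by
    have key : (Real.cos θ * ‖z‖) * (Real.cos θ * ‖z‖) ≤ a * a :=
      mul_le_mul hz hz (mul_nonneg hcos.le hnz) ((mul_nonneg hcos.le hnz).trans hz)
    have h1 : u ^ 2 ≤ (Real.sin θ * ‖z‖) ^ 2 := by nlinarith [sq_nonneg ‖z‖]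
    exact (pow_le_pow_iff_left₀ hu0 (mul_nonneg hsin.le hnz) two_ne_zero).mp h1
  have hu'b : u' ≤ Real.sin θ * ‖z'‖ := by
    have key : (Real.cos θ * ‖z'‖) * (Real.cos θ * ‖z'‖) ≤ a' * a' :=
      mul_le_mul hz' hz' (mul_nonneg hcos.le hnz') ((mul_nonneg hcos.le hnz').trans hz')
    have h1 : u' ^ 2 ≤ (Real.sin θ * ‖z'‖) ^ 2 := by nlinarith [sq_nonneg ‖z'‖]
    exact (pow_le_pow_iff_left₀ hu'0 (mul_nonneg hsin.le hnz') two_ne_zero).mp h1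
  have hlb : -(u * u') ≤ p - a * a' := by
    rw [← hdecomp]; exact neg_le_of_abs_le hcs
  constructor
  · have hcos2eq : Real.cos (2 * θ) = Real.cos θ ^ 2 - Real.sin θ ^ 2 := by
      rw [Real.cos_two_mul]; linarith
    rw [hcos2eq]
    have h1 : u * u' ≤ (Real.sin θ * ‖z‖) * (Real.sin θ * ‖z'‖) :=
      mul_le_mul hub hu'b hu'0 (mul_nonneg hsin.le hnz)
    have h2 : (Real.cos θ * ‖z‖) * (Real.cos θ * ‖z'‖) ≤ a * a' :=
      mul_le_mul hz hz' (mul_nonneg hcos.le hnz') ((mul_nonneg hcos.le hnz).trans hz)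
    have hnn : 0 ≤ Real.cos θ ^ 2 - Real.sin θ ^ 2 := by rw [← hcos2eq]; exact hcos2.le
    have hprod : r * r ≤ ‖z‖ * ‖z'‖ := mul_le_mul hzr hz'r hr.le hnz
    have key : (Real.cos θ ^ 2 - Real.sin θ ^ 2) * (r * r) ≤
        (Real.cos θ ^ 2 - Real.sin θ ^ 2) * (‖z‖ * ‖z'‖) :=
      mul_le_mul_of_nonneg_left hprod hnn
    linarith [h1, h2, hlb, key]
  · rw [hp]
    calc ⟪z, z'⟫ ≤ ‖z‖ * ‖z'‖ := real_inner_le_norm z z'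
      _ ≤ R * R := mul_le_mul hzR hz'R hnz' (hr.le.trans (hzr.trans hzR))
      _ = R ^ 2 := (sq R).symm
end
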